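/- arXiv:2303.04860 — 4 statements merged into one kernel-verified Lean document; each statement's English description precedes it below -/
import Mathlib

section
/- Let p be a prime, let r, s ≥ 1, and let G = ℤ/d_1ℤ × ⋯ × ℤ/d_nℤ be a product of cyclic groups with each d_i dividing p^r. Let W be a p^s-torsion abelian group, and let P : ℤ^n → W be a polynomial of degree at most k, i.e. ∂_{h_1}⋯∂_{h_{k+1}} P = 0 for all h_1,…,h_{k+1} ∈ ℤ^n, where ∂_h P(x) := P(x+h) − P(x). Then the map x ↦ P(|x|) from G to W is a polynomial of degree at most k·s·(p^r−1), i.e. all its iterated difference operators of order k·s·(p^r−1)+1 vanish identically. -/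
/-- The discrete derivative `∂_h f (x) = f(x+h) - f(x)`. -/
def addDeriv {A M : Type*} [AddCommGroup A] [AddCommGroup M] (h : A) (f : A → M) : A → M :=
  fun x => f (x + h) - f x

/-- Iterated discrete derivative `∂_{h_1} ⋯ ∂_{h_j} f`. -/
def addDerivIter {A M : Type*} [AddCommGroup A] [AddCommGroup M] :
    (j : ℕ) → (Fin j → A) → (A → M) → (A → M)
  | 0, _, f => f
  | j + 1, h, f => addDerivIter j (fun i => h i.succ) (addDeriv (h 0) f)


/-!
On `ℤ/dℤ` with `d ∣ p^r` the translation by `1` has order dividing `q = p^r`, so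
`Δ^q = -∑_{0<j<q} C(q,j) Δ^j` with every coefficient divisible by `p`. Iterating, `σ(q-1)+1`
differences kill every `p^σ`-torsion-valued function; hence every function `ℤ/dℤ → W` has degree
at most `s(q-1)`. In several variables, Newton's expansion in the first coordinate gives
`P(|x|) = ∑_{a ≤ k} C(|x₀|, a) • Q_a(|x'|)` with `deg Q_a ≤ k - a`. The factor `C(|x₀|, a)` has
degree at most `a·s(q-1)` (it is constant for `a = 0`), so the Leibniz rule and induction on the
number of coordinates give the bound `k·s·(q-1)`.
-/

open Finset Function
open scoped fwdDiff

section Degree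

variable {A B M : Type*} [AddCommGroup A] [AddCommGroup B] [AddCommGroup M]

def IsPolynomialOfDegreeLE (m : ℕ) (f : A → M) : Prop :=
  ∀ h : Fin (m + 1) → A, addDerivIter (m + 1) h f = 0

theorem isPolynomialOfDegreeLE_zero_iff {f : A → M} :
    IsPolynomialOfDegreeLE 0 f ↔ ∀ h, Δ_[h] f = 0 :=
  ⟨fun hf h => hf fun _ => h, fun hf h => hf (h 0)⟩

theorem isPolynomialOfDegreeLE_succ_iff {m : ℕ} {f : A → M} :
    IsPolynomialOfDegreeLE (m + 1) f ↔ ∀ h, IsPolynomialOfDegreeLE m (Δ_[h] f) :=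
  ⟨fun hf h h' => hf (Fin.cons h h'), fun hf h => hf (h 0) (Fin.tail h)⟩

theorem isPolynomialOfDegreeLE_const (m : ℕ) (c : M) :
    IsPolynomialOfDegreeLE m (fun _ : A => c) := by
  induction m generalizing c with
  | zero => exact isPolynomialOfDegreeLE_zero_iff.2 fun h => fwdDiff_const h c
  | succ m ih => exact isPolynomialOfDegreeLE_succ_iff.2 fun h => fwdDiff_const h c ▸ ih 0

theorem isPolynomialOfDegreeLE_zero_of_subsingleton [Subsingleton A] (f : A → M) :
    IsPolynomialOfDegreeLE 0 f :=
  isPolynomialOfDegreeLE_zero_iff.2 fun h => funext fun x => by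
    simp [fwdDiff, Subsingleton.elim (x + h) x]

namespace IsPolynomialOfDegreeLE

variable {m : ℕ} {f g : A → M}

theorem fwdDiff (hf : IsPolynomialOfDegreeLE m f) (h : A) :
    IsPolynomialOfDegreeLE (m - 1) (Δ_[h] f) := by
  cases m with
  | zero => exact isPolynomialOfDegreeLE_zero_iff.1 hf h ▸ isPolynomialOfDegreeLE_const _ 0
  | succ m => exact isPolynomialOfDegreeLE_succ_iff.1 hf h

theorem fwdDiff_iter (hf : IsPolynomialOfDegreeLE m f) (h : A) (a : ℕ) :
    IsPolynomialOfDegreeLE (m - a) ((Δ_[h])^[a] f) := by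
  induction a with
  | zero => exact hf
  | succ a ih => rw [iterate_succ_apply', ← Nat.sub_sub]; exact ih.fwdDiff h

theorem fwdDiff_iter_eq_zero (hf : IsPolynomialOfDegreeLE m f) (h : A) :
    (Δ_[h])^[m + 1] f = 0 := by
  have h0 := hf.fwdDiff_iter h m
  rw [Nat.sub_self] at h0
  rw [iterate_succ_apply', isPolynomialOfDegreeLE_zero_iff.1 h0 h]

theorem succ (hf : IsPolynomialOfDegreeLE m f) : IsPolynomialOfDegreeLE (m + 1) f := by
  induction m generalizing f with
  | zero =>
    exact isPolynomialOfDegreeLE_succ_iff.2 fun h =>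
      isPolynomialOfDegreeLE_zero_iff.1 hf h ▸ isPolynomialOfDegreeLE_const 0 0
  | succ m ih =>
    exact isPolynomialOfDegreeLE_succ_iff.2 fun h => ih (isPolynomialOfDegreeLE_succ_iff.1 hf h)

theorem mono {m' : ℕ} (hf : IsPolynomialOfDegreeLE m f) (hm : m ≤ m') :
    IsPolynomialOfDegreeLE m' f := by
  induction m', hm using Nat.le_induction with
  | base => exact hf
  | succ m' _ ih => exact ih.succ

theorem add (hf : IsPolynomialOfDegreeLE m f) (hg : IsPolynomialOfDegreeLE m g) :
    IsPolynomialOfDegreeLE m (f + g) := by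
  induction m generalizing f g with
  | zero =>
    exact isPolynomialOfDegreeLE_zero_iff.2 fun h => by
      rw [fwdDiff_add, isPolynomialOfDegreeLE_zero_iff.1 hf h,
        isPolynomialOfDegreeLE_zero_iff.1 hg h, add_zero]
  | succ m ih =>
    exact isPolynomialOfDegreeLE_succ_iff.2 fun h => by
      rw [fwdDiff_add]
      exact ih (isPolynomialOfDegreeLE_succ_iff.1 hf h) (isPolynomialOfDegreeLE_succ_iff.1 hg h)

theorem sum {ι : Type*} {s : Finset ι} {f : ι → A → M}
    (hf : ∀ i ∈ s, IsPolynomialOfDegreeLE m (f i)) :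
    IsPolynomialOfDegreeLE m (∑ i ∈ s, f i) :=
  Finset.sum_induction f _ (fun _ _ => add) (isPolynomialOfDegreeLE_const m 0) hf

theorem const_smul {R : Type*} [Monoid R] [DistribMulAction R M]
    (hf : IsPolynomialOfDegreeLE m f) (c : R) : IsPolynomialOfDegreeLE m (c • f) := by
  induction m generalizing f with
  | zero =>
    exact isPolynomialOfDegreeLE_zero_iff.2 fun h => by
      rw [fwdDiff_const_smul, isPolynomialOfDegreeLE_zero_iff.1 hf h, smul_zero]
  | succ m ih =>
    exact isPolynomialOfDegreeLE_succ_iff.2 fun h => by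
      rw [fwdDiff_const_smul]
      exact ih (isPolynomialOfDegreeLE_succ_iff.1 hf h)

theorem comp_add_right (hf : IsPolynomialOfDegreeLE m f) (c : A) :
    IsPolynomialOfDegreeLE m (fun x => f (x + c)) := by
  induction m generalizing f with
  | zero =>
    exact isPolynomialOfDegreeLE_zero_iff.2 fun h => funext fun x => by
      rw [fwdDiff_comp_add, isPolynomialOfDegreeLE_zero_iff.1 hf h]; rfl
  | succ m ih =>
    exact isPolynomialOfDegreeLE_succ_iff.2 fun h => by
      rw [show Δ_[h] (fun x => f (x + c)) = fun x => Δ_[h] f (x + c) from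
        funext (fwdDiff_comp_add h f c)]
      exact ih (isPolynomialOfDegreeLE_succ_iff.1 hf h)

theorem comp_addMonoidHom (hf : IsPolynomialOfDegreeLE m f) (φ : B →+ A) :
    IsPolynomialOfDegreeLE m (f ∘ φ) := by
  have hΔ : ∀ (h : B) (f : A → M), Δ_[h] (f ∘ φ) = Δ_[φ h] f ∘ φ := fun h f =>
    funext fun x => by simp [_root_.fwdDiff]
  induction m generalizing f with
  | zero =>
    exact isPolynomialOfDegreeLE_zero_iff.2 fun h => by
      rw [hΔ, isPolynomialOfDegreeLE_zero_iff.1 hf]; rfl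
  | succ m ih =>
    exact isPolynomialOfDegreeLE_succ_iff.2 fun h => by
      rw [hΔ]
      exact ih (isPolynomialOfDegreeLE_succ_iff.1 hf _)

end IsPolynomialOfDegreeLE

end Degree

section Difference

variable {A M : Type*} [AddCommGroup A] [AddCommGroup M]

theorem fwdDiff_iter_zero (h : A) (n : ℕ) : (Δ_[h])^[n] (0 : A → M) = 0 :=
  iterate_fixed (fwdDiff_const h 0) n

theorem fwdDiff_nsmul (h : A) (v : ℕ) (f : A → M) :
    Δ_[v • h] f = ∑ j ∈ range v, fun x => Δ_[h] f (x + j • h) := by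
  induction v with
  | zero => funext x; simp [fwdDiff]
  | succ v ih =>
    funext x
    rw [sum_range_succ, Pi.add_apply, ← ih]
    simp only [fwdDiff, succ_nsmul, ← add_assoc]
    abel

theorem IsPolynomialOfDegreeLE.shift_eq_sum_choose_smul {k : ℕ} {f : A → M}
    (hf : IsPolynomialOfDegreeLE k f) (h y : A) (t : ℕ) :
    f (y + t • h) = ∑ a ∈ range (k + 1), t.choose a • (Δ_[h])^[a] f y := by
  have hvanish : ∀ a, k + 1 ≤ a → (Δ_[h])^[a] f = 0 := fun a ha => by
    rw [← Nat.sub_add_cancel ha, iterate_add_apply, hf.fwdDiff_iter_eq_zero, fwdDiff_iter_zero]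
  rw [shift_eq_sum_fwdDiff_iter h f t y,
    sum_subset (range_subset_range.2 (le_max_left (t + 1) (k + 1))),
    ← sum_subset (range_subset_range.2 (le_max_right (t + 1) (k + 1)))]
  · intro a _ ha
    rw [hvanish a (by simpa using ha), Pi.zero_apply, smul_zero]
  · intro a _ ha
    rw [Nat.choose_eq_zero_of_lt (by simpa using ha), zero_smul]

theorem IsPolynomialOfDegreeLE.zsmul {α β : ℕ} {u : A → ℤ} {g : A → M}
    (hu : ∀ c : M, IsPolynomialOfDegreeLE α fun x => u x • c)
    (hg : IsPolynomialOfDegreeLE β g) :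
    IsPolynomialOfDegreeLE (α + β) fun x => u x • g x := by
  induction β generalizing α u g with
  | zero =>
    have hconst : ∀ x, g x = g 0 := fun x => by
      simpa [_root_.fwdDiff, sub_eq_zero] using
        congr_fun (isPolynomialOfDegreeLE_zero_iff.1 hg x) 0
    rw [add_zero, funext fun x => congrArg (u x • ·) (hconst x)]
    exact hu (g 0)
  | succ β ih =>
    induction α generalizing u with
    | zero =>
      have hconst : ∀ c x, u x • c = u 0 • c := fun c x => by
        simpa [_root_.fwdDiff, sub_eq_zero] using
          congr_fun (isPolynomialOfDegreeLE_zero_iff.1 (hu c) x) 0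
      rw [zero_add, funext fun x => hconst (g x) x]
      exact hg.const_smul (u 0)
    | succ α ihα =>
      show IsPolynomialOfDegreeLE (α + 1 + β + 1) _
      refine isPolynomialOfDegreeLE_succ_iff.2 fun b => ?_
      have hsplit : Δ_[b] (fun x => u x • g x) =
          (fun x => u (x + b) • Δ_[b] g x) + fun x => Δ_[b] u x • g x := by
        funext x
        simp only [_root_.fwdDiff, Pi.add_apply, smul_sub, sub_smul]
        abel
      have hΔu : ∀ c : M, IsPolynomialOfDegreeLE α fun x => Δ_[b] u x • c := fun c => by
        have h := (hu c).fwdDiff b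
        rwa [fwdDiff_smul_const, Nat.add_sub_cancel] at h
      rw [hsplit, show α + 1 + β = α + (β + 1) by omega]
      exact (ih (fun c => (hu c).comp_add_right b) (isPolynomialOfDegreeLE_succ_iff.1 hg b)
        |>.mono (by omega)).add (ihα hΔu)

theorem fwdDiff_iter_eq_neg_sum_of_nsmul_eq_zero {q : ℕ} (hq : 1 ≤ q) {h : A}
    (hqh : q • h = 0) (f : A → M) :
    (Δ_[h])^[q] f = -∑ j ∈ Ico 1 q, q.choose j • (Δ_[h])^[j] f := by
  funext y
  have hnewton := shift_eq_sum_fwdDiff_iter h f q y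
  rw [hqh, add_zero, sum_range_succ, range_eq_Ico, sum_eq_sum_Ico_succ_bot (by omega)] at hnewton
  simp only [Nat.choose_zero_right, Nat.choose_self, iterate_zero, id, one_smul,
    zero_add] at hnewton
  rw [add_assoc, left_eq_add, add_comm] at hnewton
  simpa [eq_neg_iff_add_eq_zero] using hnewton

theorem fwdDiff_iter_eq_zero_of_pow_nsmul_eq_zero {p r : ℕ} (hp : p.Prime) {h : A}
    (hh : p ^ r • h = 0) (σ : ℕ) {f : A → M} (hf : ∀ x, p ^ σ • f x = 0) :
    (Δ_[h])^[σ * (p ^ r - 1) + 1] f = 0 := by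
  induction σ generalizing f with
  | zero =>
    rw [show f = 0 from funext fun x => by simpa using hf x, fwdDiff_iter_zero]
  | succ σ ih =>
    have hq : 1 ≤ p ^ r := Nat.one_le_pow _ _ hp.pos
    have hpf : ∀ x, p ^ σ • (p • f) x = 0 := fun x => by
      rw [Pi.smul_apply, smul_smul, ← pow_succ]; exact hf x
    rw [show (σ + 1) * (p ^ r - 1) + 1 = p ^ r + σ * (p ^ r - 1) by
        rw [add_mul, one_mul]; omega,
      iterate_add_apply, fwdDiff_iter_eq_neg_sum_of_nsmul_eq_zero hq hh, neg_eq_zero]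
    refine sum_eq_zero fun j hj => ?_
    rw [mem_Ico] at hj
    obtain ⟨c, hc⟩ := hp.dvd_choose_pow (by omega : j ≠ 0) (by omega : j ≠ p ^ r)
    have hvanish : p • (Δ_[h])^[j] ((Δ_[h])^[σ * (p ^ r - 1)] f) = 0 := by
      rw [← fwdDiff_iter_const_smul, ← fwdDiff_iter_const_smul, ← iterate_add_apply,
        show j + σ * (p ^ r - 1) = (j - 1) + (σ * (p ^ r - 1) + 1) by omega,
        iterate_add_apply, ih hpf, fwdDiff_iter_zero]
    rw [hc, mul_comm, mul_smul, hvanish, smul_zero]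

theorem isPolynomialOfDegreeLE_of_fwdDiff_iter_eq_zero {h : A} (hgen : ∀ x, ∃ v : ℕ, v • h = x)
    {m : ℕ} {f : A → M} (hf : (Δ_[h])^[m + 1] f = 0) : IsPolynomialOfDegreeLE m f := by
  induction m generalizing f with
  | zero =>
    refine isPolynomialOfDegreeLE_zero_iff.2 fun b => ?_
    obtain ⟨v, rfl⟩ := hgen b
    rw [fwdDiff_nsmul, show Δ_[h] f = 0 from hf]
    exact sum_eq_zero fun _ _ => rfl
  | succ m ih =>
    refine isPolynomialOfDegreeLE_succ_iff.2 fun b => ?_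
    obtain ⟨v, rfl⟩ := hgen b
    rw [fwdDiff_nsmul]
    exact IsPolynomialOfDegreeLE.sum fun j _ => (ih hf).comp_add_right _

theorem isPolynomialOfDegreeLE_of_pow_nsmul_eq_zero {p r : ℕ} (hp : p.Prime) {d : ℕ}
    (hd : d ∣ p ^ r) {σ : ℕ} {f : ZMod d → M} (hf : ∀ x, p ^ σ • f x = 0) :
    IsPolynomialOfDegreeLE (σ * (p ^ r - 1)) f := by
  have : NeZero d := ⟨ne_zero_of_dvd_ne_zero (pow_ne_zero r hp.ne_zero) hd⟩
  have hgen : ∀ x : ZMod d, ∃ v : ℕ, v • (1 : ZMod d) = x := fun x => ⟨x.val, by simp⟩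
  have hord : p ^ r • (1 : ZMod d) = 0 := by
    rw [nsmul_one]; exact_mod_cast (ZMod.natCast_eq_zero_iff _ _).2 hd
  exact isPolynomialOfDegreeLE_of_fwdDiff_iter_eq_zero hgen
    (fwdDiff_iter_eq_zero_of_pow_nsmul_eq_zero hp hord σ hf)

end Difference

section Residue

def residue {ι : Type*} {d : ι → ℕ} (x : ∀ i, ZMod (d i)) : ι → ℤ := fun i => (x i).val

theorem residue_eq_cons_add_nsmul {n : ℕ} {d : Fin (n + 1) → ℕ} (x : ∀ i, ZMod (d i)) :
    residue x = Fin.cons 0 (residue (Fin.tail x)) + (x 0).val • Pi.single 0 1 := by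
  ext i
  cases i using Fin.cases <;> simp [residue, Fin.tail]

variable {p r s : ℕ} {W : Type*} [AddCommGroup W]

theorem isPolynomialOfDegreeLE_choose_val_smul (hp : p.Prime) {d : ℕ} (hd : d ∣ p ^ r)
    (hW : ∀ w : W, p ^ s • w = 0) (a : ℕ) (c : W) :
    IsPolynomialOfDegreeLE (a * s * (p ^ r - 1)) fun t : ZMod d => (t.val.choose a : ℤ) • c := by
  rcases Nat.eq_zero_or_pos a with rfl | ha
  · simpa using isPolynomialOfDegreeLE_const 0 c
  · rw [mul_assoc]
    exact (isPolynomialOfDegreeLE_of_pow_nsmul_eq_zero hp hd fun _ => hW _).mono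
      (Nat.le_mul_of_pos_left _ ha)

theorem IsPolynomialOfDegreeLE.comp_residue (hp : p.Prime) (hW : ∀ w : W, p ^ s • w = 0)
    {n : ℕ} {d : Fin n → ℕ} (hd : ∀ i, d i ∣ p ^ r) {k : ℕ} {P : (Fin n → ℤ) → W}
    (hP : IsPolynomialOfDegreeLE k P) :
    IsPolynomialOfDegreeLE (k * s * (p ^ r - 1)) (P ∘ residue (d := d)) := by
  induction n generalizing k with
  | zero => exact (isPolynomialOfDegreeLE_zero_of_subsingleton _).mono (Nat.zero_le _)
  | succ n ih =>
    let consZero : (Fin n → ℤ) →+ (Fin (n + 1) → ℤ) :=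
      AddMonoidHom.mk' (fun z => Fin.cons 0 z) fun _ _ => by
        ext i; cases i using Fin.cases <;> simp
    let tail : (∀ i, ZMod (d i)) →+ ∀ i : Fin n, ZMod (d i.succ) :=
      AddMonoidHom.mk' Fin.tail fun _ _ => rfl
    let e₀ : Fin (n + 1) → ℤ := Pi.single 0 1
    have hexpand : P ∘ residue = ∑ a ∈ range (k + 1), fun x =>
        ((x 0).val.choose a : ℤ) • ((Δ_[e₀])^[a] P ∘ consZero ∘ residue ∘ tail) x := by
      funext x
      rw [comp_apply, residue_eq_cons_add_nsmul, hP.shift_eq_sum_choose_smul, Finset.sum_apply]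
      simp only [natCast_zsmul]
      rfl
    rw [hexpand]
    refine IsPolynomialOfDegreeLE.sum fun a ha => ?_
    have hcoeff := fun c => (isPolynomialOfDegreeLE_choose_val_smul hp (hd 0) hW a c)
      |>.comp_addMonoidHom (Pi.evalAddMonoidHom (fun i => ZMod (d i)) 0)
    have htail := (ih (fun i => hd i.succ) ((hP.fwdDiff_iter e₀ a).comp_addMonoidHom consZero))
      |>.comp_addMonoidHom tail
    have hterm := IsPolynomialOfDegreeLE.zsmul hcoeff htail
    rw [mem_range] at ha
    rwa [← add_mul, ← add_mul, Nat.add_sub_cancel' (by omega)] at hterm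

end Residue

theorem residue_of_polynomial_is_polynomial_general (p : ℕ) (hp : p.Prime) (r s : ℕ)
    (n : ℕ) (d : Fin n → ℕ) (hd : ∀ i, d i ∣ p ^ r)
    (W : Type*) [AddCommGroup W] (hW : ∀ w : W, p ^ s • w = 0)
    (k : ℕ) (P : (Fin n → ℤ) → W)
    (hP : ∀ h : Fin (k + 1) → (Fin n → ℤ), addDerivIter (k + 1) h P = 0) :
    ∀ h : Fin (k * s * (p ^ r - 1) + 1) → (∀ i, ZMod (d i)),
      addDerivIter (k * s * (p ^ r - 1) + 1) h
        (fun x : ∀ i, ZMod (d i) => P (fun i => ((x i).val : ℤ))) = 0 :=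
  IsPolynomialOfDegreeLE.comp_residue hp hW hd hP

/-- Let `p` be a prime, `r, s ≥ 1`, and let `G = ℤ/d_1ℤ × ⋯ × ℤ/d_nℤ` with each `d_i ∣ p^r`.
Let `W` be a `p^s`-torsion abelian group and let `P : ℤ^n → W` be a polynomial of degree at
most `k`.  Then `x ↦ P(|x|)` (with `|x|` the standard representative) is a polynomial of
degree at most `k·s·(p^r − 1)` on `G`. -/
theorem residue_of_polynomial_is_polynomial (p : ℕ) (hp : p.Prime) (r s : ℕ)
    (hr : 1 ≤ r) (hs : 1 ≤ s) (n : ℕ) (d : Fin n → ℕ) (hd : ∀ i, d i ∣ p ^ r)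
    (W : Type*) [AddCommGroup W] (hW : ∀ w : W, p ^ s • w = 0)
    (k : ℕ) (P : (Fin n → ℤ) → W)
    (hP : ∀ h : Fin (k + 1) → (Fin n → ℤ), addDerivIter (k + 1) h P = 0) :
    ∀ h : Fin (k * s * (p ^ r - 1) + 1) → (∀ i, ZMod (d i)),
      addDerivIter (k * s * (p ^ r - 1) + 1) h
        (fun x : ∀ i, ZMod (d i) => P (fun i => ((x i).val : ℤ))) = 0 :=
  residue_of_polynomial_is_polynomial_general p hp r s n d hd W hW k P hP
end

section
/- Let G be a countable torsion-free (discrete) abelian group and let m ≥ 1. Then the abelian group SML_m(G, ℝ/ℤ) of symmetric multilinear maps from G^m to the circle group ℝ/ℤ is divisible. -/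
/-- `b : G^m → H` is multilinear if it is a group homomorphism in each coordinate. -/
def IsMultilinear {G H : Type*} [AddCommGroup G] [AddCommGroup H] {m : ℕ}
    (b : (Fin m → G) → H) : Prop :=
  ∀ (i : Fin m) (g : Fin m → G) (x y : G),
    b (Function.update g i (x + y)) = b (Function.update g i x) + b (Function.update g i y)

/-- `b : G^m → H` is symmetric if it is invariant under all permutations of its arguments. -/
def IsSymmetric {G H : Type*} {m : ℕ} (b : (Fin m → G) → H) : Prop :=
  ∀ (σ : Equiv.Perm (Fin m)) (g : Fin m → G), b (g ∘ σ) = b g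

/-!
Symmetric multilinear maps `G^m → D` are the homomorphisms out of the symmetric power `Sym^m G`,
so for a divisible (hence injective) `D` such as `ℝ/ℤ`, dividing `b` by `n` amounts to extending
it along multiplication by `n` on `Sym^m G`; this is possible as soon as `Sym^m G` is torsion-free.
If `G` is free with basis `(e_k)`, then `Sym^m G` embeds into `ℤ[X_k]` by sending `g` to the
product of the linear forms of the `g j`: the inverse sends a monomial to the symmetric product of
the corresponding basis vectors. A general torsion-free `G` is the union of its finitely generated,
hence free, subgroups, and a relation in `Sym^m G` already holds in the symmetric power of one of
them.
-/

open Finsupp Function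

theorem IsSymmetric.comp {G H K : Type*} {m : ℕ} {b : (Fin m → G) → H} (hb : IsSymmetric b)
    (f : H → K) : IsSymmetric (f ∘ b) := fun σ g => congrArg f (hb σ g)

section Multilinear

variable {G H K : Type*} [AddCommGroup G] [AddCommGroup H] [AddCommGroup K] {m : ℕ}

theorem IsMultilinear.comp {b : (Fin m → G) → H} (hb : IsMultilinear b) (f : H →+ K) :
    IsMultilinear (f ∘ b) := fun i g x y => by
  simp only [Function.comp_apply, hb i g x y, map_add]

theorem MultilinearMap.isMultilinear (f : MultilinearMap ℤ (fun _ : Fin m => G) H) :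
    IsMultilinear f := fun i g x y => f.map_update_add g i x y

def IsMultilinear.toMultilinearMap {b : (Fin m → G) → H} (hb : IsMultilinear b) :
    MultilinearMap ℤ (fun _ : Fin m => G) H where
  toFun := b
  map_update_add' g i x y := by
    cases Subsingleton.elim ‹DecidableEq (Fin m)› (instDecidableEqFin m)
    exact hb i g x y
  map_update_smul' g i c x := by
    cases Subsingleton.elim ‹DecidableEq (Fin m)› (instDecidableEqFin m)
    exact (AddMonoidHom.mk' (fun x => b (update g i x)) (hb i g)).map_zsmul c x

end Multilinear

theorem Module.Baer.exists_nsmul_eq {M D : Type*} [AddCommGroup M] [AddCommGroup D]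
    [Module.IsTorsionFree ℤ M] (hD : Module.Baer ℤ D) (f : M →ₗ[ℤ] D) {n : ℕ} (hn : n ≠ 0) :
    ∃ f' : M →ₗ[ℤ] D, n • f' = f := by
  obtain ⟨f', hf'⟩ := hD.extension_property ((n : ℤ) • LinearMap.id)
    (smul_right_injective M (Int.natCast_ne_zero.2 hn)) f
  refine ⟨f', LinearMap.ext fun x => ?_⟩
  simpa using LinearMap.congr_fun hf' x

namespace SymPow

variable (G : Type*) [AddCommGroup G] (m : ℕ)

def relatorsOn (S : Set G) : Set ((Fin m → G) →₀ ℤ) :=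
  {z | (∃ (i : Fin m) (g : Fin m → G) (x y : G), (∀ j, g j ∈ S) ∧ x ∈ S ∧ y ∈ S ∧
          z = single (update g i (x + y)) 1 - single (update g i x) 1
            - single (update g i y) 1) ∨
       (∃ (σ : Equiv.Perm (Fin m)) (g : Fin m → G), (∀ j, g j ∈ S) ∧
          z = single (g ∘ σ) 1 - single g 1)}

abbrev relators : Set ((Fin m → G) →₀ ℤ) := relatorsOn G m Set.univ

end SymPow

abbrev SymPow (G : Type*) [AddCommGroup G] (m : ℕ) : Type _ :=
  ((Fin m → G) →₀ ℤ) ⧸ Submodule.span ℤ (SymPow.relators G m)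

noncomputable section

namespace SymPow

variable {G : Type*} [AddCommGroup G] {m : ℕ} {Q : Type*} [AddCommGroup Q]

def ι (g : Fin m → G) : SymPow G m := Submodule.Quotient.mk (single g 1)

theorem isMultilinear_ι : IsMultilinear (ι : (Fin m → G) → SymPow G m) := fun i g x y => by
  rw [← sub_eq_zero, ι, ι, ι, ← Submodule.Quotient.mk_add, ← Submodule.Quotient.mk_sub,
    Submodule.Quotient.mk_eq_zero, ← sub_sub]
  exact Submodule.subset_span (Or.inl ⟨i, g, x, y, fun _ => trivial, trivial, trivial, rfl⟩)

theorem isSymmetric_ι : IsSymmetric (ι : (Fin m → G) → SymPow G m) := fun σ g => by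
  rw [← sub_eq_zero, ι, ι, ← Submodule.Quotient.mk_sub, Submodule.Quotient.mk_eq_zero]
  exact Submodule.subset_span (Or.inr ⟨σ, g, fun _ => trivial, rfl⟩)

theorem ext {f f' : SymPow G m →ₗ[ℤ] Q} (h : ∀ g, f (ι g) = f' (ι g)) : f = f' :=
  Submodule.linearMap_qext _ (lhom_ext' fun g => LinearMap.ext_ring (h g))

def lift (b : (Fin m → G) → Q) (hml : IsMultilinear b) (hsym : IsSymmetric b) :
    SymPow G m →ₗ[ℤ] Q :=
  (Submodule.span ℤ (relators G m)).liftQ (linearCombination ℤ b) <| by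
    rw [Submodule.span_le]
    rintro z (⟨i, g, x, y, -, -, -, rfl⟩ | ⟨σ, g, -, rfl⟩) <;>
      simp only [SetLike.mem_coe, LinearMap.mem_ker, map_sub, linearCombination_single, one_smul]
    · rw [hml i g x y]; abel
    · rw [hsym σ g, sub_self]

@[simp]
theorem lift_ι (b : (Fin m → G) → Q) (hml : IsMultilinear b) (hsym : IsSymmetric b)
    (g : Fin m → G) : lift b hml hsym (ι g) = b g := by
  rw [lift, ι, Submodule.liftQ_apply, linearCombination_single, one_smul]

theorem ext_basis {κ : Type*} (bs : Module.Basis κ ℤ G) {f f' : SymPow G m →ₗ[ℤ] Q}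
    (h : ∀ t : Fin m → κ, f (ι (bs ∘ t)) = f' (ι (bs ∘ t))) : f = f' := by
  refine ext fun g => ?_
  have := Module.Basis.ext_multilinear (fun _ => bs)
    (f := f.compMultilinearMap isMultilinear_ι.toMultilinearMap)
    (g := f'.compMultilinearMap isMultilinear_ι.toMultilinearMap) h
  exact DFunLike.congr_fun this g

section Free

open MvPolynomial

variable {κ : Type*}

def exponent (t : Fin m → κ) : κ →₀ ℕ := ∑ j, single (t j) 1

theorem exponent_apply (t : Fin m → κ) (a : κ) : exponent t a = Nat.card {j // t j = a} := by
  classical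
  simp [exponent, Finsupp.finsetSum_apply, Finsupp.single_apply, Nat.card_eq_fintype_card,
    Fintype.card_subtype, Finset.sum_boole, eq_comm]

theorem exists_perm_comp_eq_of_exponent_eq {t t' : Fin m → κ} (h : exponent t = exponent t') :
    ∃ σ : Equiv.Perm (Fin m), t ∘ σ = t' := by
  have hcard (a : κ) : Nat.card {j // t' j = a} = Nat.card {j // t j = a} := by
    rw [← exponent_apply, ← exponent_apply, h]
  exact ⟨Equiv.ofFiberEquiv fun a => (Finite.card_eq.1 (hcard a)).some,
    funext fun j => Equiv.ofFiberEquiv_map _ j⟩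

variable (bs : Module.Basis κ ℤ G)

def toPoly : SymPow G m →ₗ[ℤ] MvPolynomial κ ℤ :=
  lift (MultilinearMap.mkPiAlgebra ℤ (Fin m) (MvPolynomial κ ℤ)
      |>.compLinearMap fun _ => bs.constr ℤ X)
    (MultilinearMap.isMultilinear _)
    (show IsSymmetric _ from fun σ g => by
      simpa using Equiv.prod_comp σ fun j => bs.constr ℤ X (g j))

theorem toPoly_ι_basis (t : Fin m → κ) : toPoly bs (ι (bs ∘ t)) = monomial (exponent t) 1 := by
  rw [toPoly, lift_ι]
  simp [exponent, monomial_sum_one, X]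

open scoped Classical in
def ofPoly : MvPolynomial κ ℤ →ₗ[ℤ] SymPow G m :=
  (basisMonomials κ ℤ).constr ℤ fun s =>
    if h : ∃ t : Fin m → κ, exponent t = s then ι (bs ∘ h.choose) else 0

theorem ofPoly_monomial_exponent (t : Fin m → κ) :
    ofPoly bs (monomial (exponent t) 1) = ι (bs ∘ t) := by
  have hex : ∃ t' : Fin m → κ, exponent t' = exponent t := ⟨t, rfl⟩
  obtain ⟨σ, hσ⟩ := exists_perm_comp_eq_of_exponent_eq hex.choose_spec.symm
  refine ((basisMonomials κ ℤ).constr_basis ℤ _ (exponent t)).trans ?_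
  rw [dif_pos hex, ← hσ, ← comp_assoc, isSymmetric_ι]

theorem ofPoly_comp_toPoly : ofPoly bs ∘ₗ toPoly (m := m) bs = LinearMap.id :=
  ext_basis bs fun t => by
    rw [LinearMap.comp_apply, toPoly_ι_basis, ofPoly_monomial_exponent, LinearMap.id_apply]

theorem toPoly_injective : Injective (toPoly (m := m) bs) :=
  LeftInverse.injective (g := ofPoly bs) fun a => LinearMap.congr_fun (ofPoly_comp_toPoly bs) a

include bs in
theorem isTorsionFree_of_basis : Module.IsTorsionFree ℤ (SymPow G m) :=
  (toPoly_injective bs).moduleIsTorsionFree _ (map_zsmul _)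

end Free

section FinitelyGenerated

variable {K : Type*} [AddCommGroup K]

theorem relatorsOn_mono {S T : Set G} (h : S ⊆ T) : relatorsOn G m S ⊆ relatorsOn G m T := by
  rintro z (⟨i, g, x, y, hg, hx, hy, rfl⟩ | ⟨σ, g, hg, rfl⟩)
  · exact Or.inl ⟨i, g, x, y, fun j => h (hg j), h hx, h hy, rfl⟩
  · exact Or.inr ⟨σ, g, fun j => h (hg j), rfl⟩

theorem exists_finite_of_mem_span_relators {z : (Fin m → G) →₀ ℤ}
    (hz : z ∈ Submodule.span ℤ (relators G m)) :
    ∃ S : Set G, S.Finite ∧ z ∈ Submodule.span ℤ (relatorsOn G m S) := by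
  obtain ⟨T, hT, hzT⟩ := Submodule.mem_span_finite_of_mem_span hz
  have hfin : ∀ r ∈ relators G m, ∃ S : Set G, S.Finite ∧ r ∈ relatorsOn G m S := by
    rintro r (⟨i, g, x, y, -, -, -, rfl⟩ | ⟨σ, g, -, rfl⟩)
    · exact ⟨Set.range g ∪ {x, y}, (Set.finite_range g).union (Set.toFinite _),
        Or.inl ⟨i, g, x, y, fun j => Or.inl ⟨j, rfl⟩, by simp, by simp, rfl⟩⟩
    · exact ⟨Set.range g, Set.finite_range g, Or.inr ⟨σ, g, fun j => ⟨j, rfl⟩, rfl⟩⟩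
  choose! S hS hrS using hfin
  refine ⟨⋃ r ∈ T, S r, T.finite_toSet.biUnion fun r hr => hS r (hT hr),
    Submodule.span_mono (fun r hr => ?_) hzT⟩
  exact relatorsOn_mono (Set.subset_biUnion_of_mem (u := S) hr) (hrS r (hT hr))

variable (m) in
def freeMap (f : G →ₗ[ℤ] K) : ((Fin m → G) →₀ ℤ) →ₗ[ℤ] ((Fin m → K) →₀ ℤ) :=
  lmapDomain ℤ ℤ (f ∘ ·)

theorem freeMap_single (f : G →ₗ[ℤ] K) (w : Fin m → G) (c : ℤ) :
    freeMap m f (single w c) = single (f ∘ w) c :=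
  mapDomain_single

theorem freeMap_injective {f : G →ₗ[ℤ] K} (hf : Injective f) : Injective (freeMap m f) :=
  mapDomain_injective hf.comp_left

theorem freeMap_image_relatorsOn (f : G →ₗ[ℤ] K) (S : Set G) :
    freeMap m f '' relatorsOn G m S = relatorsOn K m (f '' S) := by
  apply subset_antisymm
  · rintro _ ⟨z, ⟨i, g, x, y, hg, hx, hy, rfl⟩ | ⟨σ, g, hg, rfl⟩, rfl⟩
    · refine Or.inl ⟨i, f ∘ g, f x, f y, fun j => ⟨g j, hg j, rfl⟩, ⟨x, hx, rfl⟩, ⟨y, hy, rfl⟩, ?_⟩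
      simp [freeMap_single, comp_update]
    · exact Or.inr ⟨σ, f ∘ g, fun j => ⟨g j, hg j, rfl⟩, by simp [freeMap_single]; rfl⟩
  · rintro z (⟨i, g, x, y, hg, ⟨x, hx, rfl⟩, ⟨y, hy, rfl⟩, rfl⟩ | ⟨σ, g, hg, rfl⟩)
    · choose g' hg' hfg using hg
      obtain rfl : f ∘ g' = g := funext hfg
      refine ⟨_, Or.inl ⟨i, g', x, y, hg', hx, hy, rfl⟩, ?_⟩
      simp [freeMap_single, comp_update]
    · choose g' hg' hfg using hg
      obtain rfl : f ∘ g' = g := funext hfg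
      exact ⟨_, Or.inr ⟨σ, g', hg', rfl⟩, by simp [freeMap_single]; rfl⟩

theorem map_span_relators_le (f : G →ₗ[ℤ] K) :
    (Submodule.span ℤ (relators G m)).map (freeMap m f) ≤ Submodule.span ℤ (relators K m) := by
  rw [Submodule.map_span, freeMap_image_relatorsOn]
  exact Submodule.span_mono (relatorsOn_mono (Set.subset_univ _))

theorem mem_range_freeMap_subtype (H : Submodule ℤ G) {x : (Fin m → G) →₀ ℤ}
    (hx : ∀ w ∈ x.support, ∀ j, w j ∈ H) : x ∈ LinearMap.range (freeMap m H.subtype) :=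
  ⟨_, mapDomain_comapDomain _ H.injective_subtype.comp_left x
    fun w hw => ⟨fun j => ⟨w j, hx w hw j⟩, rfl⟩⟩

theorem mem_span_relators_of_freeMap_subtype (H : Submodule ℤ G) {x : (Fin m → H) →₀ ℤ}
    (hx : freeMap m H.subtype x ∈ Submodule.span ℤ (relatorsOn G m H)) :
    x ∈ Submodule.span ℤ (relators H m) := by
  have hH : (H : Set G) = H.subtype '' Set.univ := by simp
  rw [hH, ← freeMap_image_relatorsOn, ← Submodule.map_span] at hx
  obtain ⟨y, hy, hyx⟩ := hx
  rwa [← freeMap_injective H.injective_subtype hyx]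

instance [Module.IsTorsionFree ℤ G] : Module.IsTorsionFree ℤ (SymPow G m) := by
  refine .of_smul_eq_zero fun c a hca => or_iff_not_imp_left.2 fun hc => ?_
  obtain ⟨x, rfl⟩ := Submodule.Quotient.mk_surjective _ a
  rw [← Submodule.Quotient.mk_smul] at hca
  rw [Submodule.Quotient.mk_eq_zero] at hca ⊢
  obtain ⟨S, hS, hcx⟩ := exists_finite_of_mem_span_relators hca
  let H := Submodule.span ℤ (S ∪ ⋃ w ∈ x.support, Set.range w)
  have : Module.Finite ℤ H := Module.Finite.iff_fg.2 <| Submodule.fg_span <|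
    hS.union (x.support.finite_toSet.biUnion fun w _ => Set.finite_range w)
  have := isTorsionFree_of_basis (m := m) (Module.Free.chooseBasis ℤ H)
  obtain ⟨y, hy⟩ := mem_range_freeMap_subtype H fun w hw j =>
    Submodule.subset_span (Or.inr (Set.mem_biUnion hw ⟨j, rfl⟩))
  have hcy : c • y ∈ Submodule.span ℤ (relators H m) := by
    refine mem_span_relators_of_freeMap_subtype H ?_
    rw [map_smul, hy]
    exact Submodule.span_mono (relatorsOn_mono fun s hs => Submodule.subset_span (Or.inl hs)) hcx
  have hy0 : y ∈ Submodule.span ℤ (relators H m) := by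
    rw [← Submodule.Quotient.mk_eq_zero, Submodule.Quotient.mk_smul] at hcy
    rw [← Submodule.Quotient.mk_eq_zero]
    exact (smul_eq_zero_iff_right hc).1 hcy
  exact hy ▸ map_span_relators_le _ (Submodule.mem_map_of_mem hy0)

end FinitelyGenerated

end SymPow

end

theorem sml_torsionFree_divisible_general {G : Type*} [AddCommGroup G]
    (hG : ∀ (n : ℤ) (g : G), n ≠ 0 → g ≠ 0 → n • g ≠ 0)
    (m : ℕ)
    (b : (Fin m → G) → AddCircle (1 : ℝ)) (hml : IsMultilinear b) (hsym : IsSymmetric b)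
    (n : ℕ) (hn : 1 ≤ n) :
    ∃ b' : (Fin m → G) → AddCircle (1 : ℝ),
      IsMultilinear b' ∧ IsSymmetric b' ∧ n • b' = b := by
  have : Module.IsTorsionFree ℤ G := .of_smul_eq_zero fun c g h => by
    by_contra! hcg
    exact hG c g hcg.1 hcg.2 h
  obtain ⟨f, hf⟩ := (Module.Baer.of_divisible (AddCircle (1 : ℝ))).exists_nsmul_eq
    (SymPow.lift b hml hsym) (Nat.one_le_iff_ne_zero.1 hn)
  refine ⟨f ∘ SymPow.ι, SymPow.isMultilinear_ι.comp f.toAddMonoidHom,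
    SymPow.isSymmetric_ι.comp f, funext fun g => ?_⟩
  simpa using LinearMap.congr_fun hf (SymPow.ι g)

/-- For `G` a countable torsion-free abelian group and `m ≥ 1`, the group
`SML_m(G, ℝ/ℤ)` of symmetric multilinear maps `G^m → ℝ/ℤ` is divisible. -/
theorem sml_torsionFree_divisible {G : Type*} [AddCommGroup G] [Countable G]
    (hG : ∀ (n : ℤ) (g : G), n ≠ 0 → g ≠ 0 → n • g ≠ 0)
    (m : ℕ) (hm : 1 ≤ m)
    (b : (Fin m → G) → AddCircle (1 : ℝ)) (hml : IsMultilinear b) (hsym : IsSymmetric b)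
    (n : ℕ) (hn : 1 ≤ n) :
    ∃ b' : (Fin m → G) → AddCircle (1 : ℝ),
      IsMultilinear b' ∧ IsSymmetric b' ∧ n • b' = b :=
  sml_torsionFree_divisible_general hG m b hml hsym n hn
end

section
/- Let Γ be an abelian group acting on a set X (by maps T^γ : X → X with T^{γ+γ'} = T^γ ∘ T^{γ'} and T^0 = id), let U and V be abelian groups, and let m, n ≥ 0. Suppose f : X → U satisfies ∂_{γ_1}⋯∂_{γ_{m+1}} f = 0 for all γ_1,…,γ_{m+1} ∈ Γ, and g : X → V satisfies ∂_{γ_1}⋯∂_{γ_{n+1}} g = 0 for all γ_1,…,γ_{n+1} ∈ Γ, where ∂_γ h := h ∘ T^γ − h. Then the function f ⊗ g : X → U ⊗_ℤ V defined by (f ⊗ g)(x) := f(x) ⊗ g(x) satisfies ∂_{γ_1}⋯∂_{γ_{m+n+1}} (f ⊗ g) = 0 for all γ_1,…,γ_{m+n+1} ∈ Γ. -/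
open scoped TensorProduct

/-- The derivative along a map: `∂_S f (x) = f(S x) - f(x)`. -/
def actDeriv {X M : Type*} [AddCommGroup M] (S : X → X) (f : X → M) : X → M :=
  fun x => f (S x) - f x

/-- Iterated derivative `∂_{γ_1} ⋯ ∂_{γ_j} f` with respect to an action `T` of `Γ` on `X`. -/
def actDerivIter {Γ X M : Type*} [AddCommGroup M] (T : Γ → X → X) :
    (j : ℕ) → (Fin j → Γ) → (X → M) → (X → M)
  | 0, _, f => f
  | j + 1, γ, f => actDerivIter T j (fun i => γ i.succ) (actDeriv (T (γ 0)) f)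

section Aux

variable {Γ X M : Type*} [AddCommGroup M] (T : Γ → X → X)

lemma actDerivIter_add (j : ℕ) (γ : Fin j → Γ) (f g : X → M) :
    actDerivIter T j γ (f + g) = actDerivIter T j γ f + actDerivIter T j γ g := by
  induction j generalizing f g with
  | zero => rfl
  | succ j ih =>
    show actDerivIter T j _ (actDeriv (T (γ 0)) (f + g)) = _
    have h : actDeriv (T (γ 0)) (f + g)
        = actDeriv (T (γ 0)) f + actDeriv (T (γ 0)) g := by
      funext x; simp [actDeriv]; abel
    rw [h, ih]
    rfl

lemma actDerivIter_zero (j : ℕ) (γ : Fin j → Γ) :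
    actDerivIter T j γ (0 : X → M) = 0 := by
  induction j with
  | zero => rfl
  | succ j ih =>
    show actDerivIter T j _ (actDeriv (T (γ 0)) (0 : X → M)) = 0
    have h : actDeriv (T (γ 0)) (0 : X → M) = 0 := by funext x; simp [actDeriv]
    rw [h]; exact ih _

variable [AddCommGroup Γ]

lemma actDerivIter_comp (hT : ∀ γ γ' : Γ, T (γ + γ') = T γ ∘ T γ')
    (j : ℕ) (γ : Fin j → Γ) (δ : Γ) (f : X → M) :
    actDerivIter T j γ (f ∘ T δ) = (actDerivIter T j γ f) ∘ T δ := by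
  induction j generalizing f with
  | zero => rfl
  | succ j ih =>
    have hcomm : T (γ 0) ∘ T δ = T δ ∘ T (γ 0) := by
      rw [← hT, ← hT, add_comm]
    have h : actDeriv (T (γ 0)) (f ∘ T δ) = (actDeriv (T (γ 0)) f) ∘ T δ := by
      funext x
      simp only [actDeriv, Function.comp_apply]
      rw [show T (γ 0) (T δ x) = T δ (T (γ 0) x) from congrFun hcomm x]
    show actDerivIter T j _ (actDeriv (T (γ 0)) (f ∘ T δ)) = _
    rw [h, ih]
    rfl

end Aux

lemma tensor_key {Γ X U V : Type*} [AddCommGroup Γ]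
    [AddCommGroup U] [AddCommGroup V]
    (T : Γ → X → X) (hT : ∀ γ γ' : Γ, T (γ + γ') = T γ ∘ T γ') :
    ∀ (j m n : ℕ) (f : X → U) (g : X → V),
      (∀ γ : Fin (m + 1) → Γ, actDerivIter T (m + 1) γ f = 0) →
      (∀ γ : Fin (n + 1) → Γ, actDerivIter T (n + 1) γ g = 0) →
      m + n + 1 ≤ j →
      ∀ γ : Fin j → Γ, actDerivIter T j γ (fun x => f x ⊗ₜ[ℤ] g x) = 0 := by
  intro j
  induction j with
  | zero => intro m n f g _ _ h; omega
  | succ j ih =>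
    intro m n f g hf hg hle γ
    set γ0 := γ 0 with hγ0
    -- Leibniz rule
    have leib : actDeriv (T γ0) (fun x => f x ⊗ₜ[ℤ] g x)
        = (fun x => actDeriv (T γ0) f x ⊗ₜ[ℤ] (g ∘ T γ0) x)
          + (fun x => f x ⊗ₜ[ℤ] actDeriv (T γ0) g x) := by
      funext x
      simp only [actDeriv, Function.comp_apply, Pi.add_apply,
        TensorProduct.sub_tmul, TensorProduct.tmul_sub]
      abel
    show actDerivIter T j (fun i => γ i.succ) (actDeriv (T γ0) (fun x => f x ⊗ₜ[ℤ] g x)) = 0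
    rw [leib, actDerivIter_add]
    have hterm1 : actDerivIter T j (fun i => γ i.succ)
        (fun x => actDeriv (T γ0) f x ⊗ₜ[ℤ] (g ∘ T γ0) x) = 0 := by
      have hg' : ∀ γ' : Fin (n + 1) → Γ,
          actDerivIter T (n + 1) γ' (g ∘ T γ0) = 0 := by
        intro γ'
        rw [actDerivIter_comp T hT, hg γ']
        rfl
      cases m with
      | zero =>
        have hf0 : actDeriv (T γ0) f = 0 := hf (fun _ => γ0)
        have h0 : (fun x => actDeriv (T γ0) f x ⊗ₜ[ℤ] (g ∘ T γ0) x)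
            = (0 : X → U ⊗[ℤ] V) := by
          funext x; rw [hf0]; simp
        rw [h0]; exact actDerivIter_zero T j _
      | succ m' =>
        have hf' : ∀ γ' : Fin (m' + 1) → Γ,
            actDerivIter T (m' + 1) γ' (actDeriv (T γ0) f) = 0 := by
          intro γ'
          have h := hf (Fin.cons γ0 γ')
          have e : (fun i : Fin (m' + 1) =>
              (Fin.cons γ0 γ' : Fin (m' + 2) → Γ) i.succ) = γ' := by
            funext i; simp
          show actDerivIter T (m' + 1) γ' (actDeriv (T γ0) f) = 0
          rw [show actDerivIter T (m' + 1 + 1) (Fin.cons γ0 γ') f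
              = actDerivIter T (m' + 1) (fun i => (Fin.cons γ0 γ' : Fin (m' + 2) → Γ) i.succ)
                  (actDeriv (T ((Fin.cons γ0 γ' : Fin (m' + 2) → Γ) 0)) f) from rfl,
            e, Fin.cons_zero] at h
          exact h
        exact ih m' n (actDeriv (T γ0) f) (g ∘ T γ0) hf' hg' (by omega) _
    have hterm2 : actDerivIter T j (fun i => γ i.succ)
        (fun x => f x ⊗ₜ[ℤ] actDeriv (T γ0) g x) = 0 := by
      cases n with
      | zero =>
        have hg0 : actDeriv (T γ0) g = 0 := hg (fun _ => γ0)
        have h0 : (fun x => f x ⊗ₜ[ℤ] actDeriv (T γ0) g x)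
            = (0 : X → U ⊗[ℤ] V) := by
          funext x; rw [hg0]; simp
        rw [h0]; exact actDerivIter_zero T j _
      | succ n' =>
        have hg' : ∀ γ' : Fin (n' + 1) → Γ,
            actDerivIter T (n' + 1) γ' (actDeriv (T γ0) g) = 0 := by
          intro γ'
          have h := hg (Fin.cons γ0 γ')
          have e : (fun i : Fin (n' + 1) =>
              (Fin.cons γ0 γ' : Fin (n' + 2) → Γ) i.succ) = γ' := by
            funext i; simp
          rw [show actDerivIter T (n' + 1 + 1) (Fin.cons γ0 γ') g
              = actDerivIter T (n' + 1) (fun i => (Fin.cons γ0 γ' : Fin (n' + 2) → Γ) i.succ)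
                  (actDeriv (T ((Fin.cons γ0 γ' : Fin (n' + 2) → Γ) 0)) g) from rfl,
            e, Fin.cons_zero] at h
          exact h
        exact ih m n' f (actDeriv (T γ0) g) hf hg' (by omega) _
    rw [hterm1, hterm2]
    simp

/-- **Tensor products of polynomials.**  Let the abelian group `Γ` act on a set `X`, let
`U, V` be abelian groups, and suppose `f : X → U` is a polynomial of degree at most `m`
and `g : X → V` is a polynomial of degree at most `n` (with respect to the discrete
derivatives `∂_γ h = h ∘ T^γ − h`).  Then `x ↦ f(x) ⊗ g(x) : X → U ⊗_ℤ V` is a polynomial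
of degree at most `m + n`. -/
theorem tensor_product_of_polynomials {Γ X U V : Type*} [AddCommGroup Γ]
    [AddCommGroup U] [AddCommGroup V]
    (T : Γ → X → X) (hT : ∀ γ γ' : Γ, T (γ + γ') = T γ ∘ T γ') (hT0 : T 0 = id)
    (m n : ℕ) (f : X → U) (g : X → V)
    (hf : ∀ γ : Fin (m + 1) → Γ, actDerivIter T (m + 1) γ f = 0)
    (hg : ∀ γ : Fin (n + 1) → Γ, actDerivIter T (n + 1) γ g = 0) :
    ∀ γ : Fin (m + n + 1) → Γ,
      actDerivIter T (m + n + 1) γ (fun x => f x ⊗ₜ[ℤ] g x) = 0 := by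
  intro γ
  exact tensor_key T hT (m + n + 1) m n f g hf hg le_rfl γ
end

section
/- Let Γ = ⨁_{i=1}^∞ ℤ/2ℤ (finitely supported sequences) and Z = ∏_{i=1}^∞ ℤ/2ℤ. Let |·| : ℤ/2ℤ → {0,1} ⊂ ℤ be the standard representative map. For γ ∈ Γ and z ∈ Z define ρ_γ(z) := ∑_{i=1}^∞ (|z_i + γ_i| − |z_i|) mod 8 ∈ ℤ/8ℤ (a finite sum since γ is finitely supported), and on Y := Z × ℤ/8ℤ define T^γ(z,t) := (z+γ, t+ρ_γ(z)). Let φ : Y → ℝ/ℤ be φ(z, t) := |t|/8 mod 1, where |t| ∈ {0,…,7} is the standard representative of t ∈ ℤ/8ℤ. Then for all γ, γ', γ'' ∈ Γ and all (z,t) ∈ Y one has ∂_γ ∂_{γ'} ∂_{γ''} φ(z,t) = ∑_{i=1}^∞ |γ_i|·|γ'_i|·|γ''_i| / 2 mod 1, where ∂_γ φ := φ ∘ T^γ − φ. -/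
/-- The cocycle `ρ_γ(z) = ∑_i (|z_i + γ_i| − |z_i|) mod 8 ∈ ℤ/8ℤ`; the sum is finite since
`γ` is finitely supported (terms with `γ_i = 0` vanish). -/
def rho8 (γ : ℕ →₀ ZMod 2) (z : ℕ → ZMod 2) : ZMod 8 :=
  ∑ i ∈ γ.support, (((z i + γ i).val : ZMod 8) - ((z i).val : ZMod 8))

/-- The shift `T^γ(z,t) = (z + γ, t + ρ_γ(z))` on `Y = ∏ ℤ/2ℤ × ℤ/8ℤ`. -/
def Tshift (γ : ℕ →₀ ZMod 2) : (ℕ → ZMod 2) × ZMod 8 → (ℕ → ZMod 2) × ZMod 8 :=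
  fun zt => (fun i => zt.1 i + γ i, zt.2 + rho8 γ zt.1)

/-- `φ(z,t) = |t|/8 mod 1 ∈ ℝ/ℤ`. -/
noncomputable def phi8 : (ℕ → ZMod 2) × ZMod 8 → AddCircle (1 : ℝ) :=
  fun zt => ((zt.2.val : ℝ) / 8 : ℝ)

/-- The derivative `∂_γ φ = φ ∘ T^γ − φ`. -/
noncomputable def dGamma (γ : ℕ →₀ ZMod 2)
    (f : (ℕ → ZMod 2) × ZMod 8 → AddCircle (1 : ℝ)) :
    (ℕ → ZMod 2) × ZMod 8 → AddCircle (1 : ℝ) :=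
  fun zt => f (Tshift γ zt) - f zt

noncomputable def q8 (a : ZMod 8) : AddCircle (1:ℝ) := ((a.val : ℝ) / 8 : ℝ)

lemma coe_eq_of_int' (x y : ℝ) (n : ℤ) (h : x = y + n) :
    (x : AddCircle (1:ℝ)) = (y : AddCircle (1:ℝ)) := by
  subst h
  have : ((n : ℝ) : AddCircle (1:ℝ)) = 0 := by
    rw [AddCircle.coe_eq_zero_iff]
    exact ⟨n, by simp⟩
  rw [AddCircle.coe_add, this, add_zero]

lemma q8_sub (a b : ZMod 8) : q8 a - q8 b = q8 (a - b) := by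
  unfold q8
  rw [← AddCircle.coe_sub]
  have h0 : (((a.val : ℤ) - b.val - ((a-b).val : ℤ) : ℤ) : ZMod 8) = 0 := by
    push_cast [ZMod.natCast_val, ZMod.intCast_cast, ZMod.cast_id]
    ring
  obtain ⟨k, hk⟩ : (8:ℤ) ∣ ((a.val : ℤ) - b.val - ((a-b).val : ℤ)) :=
    (ZMod.intCast_zmod_eq_zero_iff_dvd _ 8).mp h0
  apply coe_eq_of_int' _ _ k
  have : ((a.val : ℝ) - b.val) - ((a-b).val : ℝ) = 8 * k := by exact_mod_cast hk
  linarith [this]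

lemma coord_triple (x a b c : ZMod 2) :
    ((((x + b + a + c).val : ZMod 8) - ((x + b + a).val : ZMod 8))
      - (((x + b + c).val : ZMod 8) - ((x + b).val : ZMod 8)))
    - ((((x + a + c).val : ZMod 8) - ((x + a).val : ZMod 8))
      - (((x + c).val : ZMod 8) - ((x).val : ZMod 8)))
    = 4 * ((a.val * b.val * c.val : ℕ) : ZMod 8) := by revert x a b c; decide

lemma rho8_eq_sum (γ : ℕ →₀ ZMod 2) (z : ℕ → ZMod 2) (s : Finset ℕ)
    (hs : γ.support ⊆ s) :
    rho8 γ z = ∑ i ∈ s, (((z i + γ i).val : ZMod 8) - ((z i).val : ZMod 8)) :=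
  Finset.sum_subset hs (fun i _ hi => by
    simp only [Finsupp.notMem_support_iff] at hi
    simp [hi])

lemma q8_four_mul (N : ℕ) : q8 ((4 * N : ℕ) : ZMod 8) = (((N : ℝ) / 2 : ℝ) : AddCircle (1:ℝ)) := by
  unfold q8
  rw [ZMod.val_natCast]
  apply coe_eq_of_int' _ _ (-((4 * N / 8 : ℕ) : ℤ))
  have h := Nat.mod_add_div (4 * N) 8
  have h2 : ((4 * N % 8 : ℕ) : ℝ) + 8 * ((4 * N / 8 : ℕ) : ℝ) = 4 * N := by exact_mod_cast h
  simp only [Int.cast_neg, Int.cast_natCast]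
  linarith

/-- For `Γ = ⨁ ℤ/2ℤ`, `Z = ∏ ℤ/2ℤ`, `Y = Z × ℤ/8ℤ` with shift
`T^γ(z,t) = (z+γ, t+ρ_γ(z))` and `φ(z,t) = |t|/8 mod 1`, the triple derivative satisfies
`∂_γ ∂_{γ'} ∂_{γ''} φ(z,t) = ∑_i |γ_i||γ'_i||γ''_i|/2 mod 1`. -/
theorem triple_deriv_phi8 (γ γ' γ'' : ℕ →₀ ZMod 2) (zt : (ℕ → ZMod 2) × ZMod 8) :
    dGamma γ (dGamma γ' (dGamma γ'' phi8)) zt =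
      ((∑ i ∈ γ.support,
          (((γ i).val : ℝ) * ((γ' i).val : ℝ) * ((γ'' i).val : ℝ)) / 2 : ℝ) :
        AddCircle (1 : ℝ)) := by
  have e1 : ∀ zt, dGamma γ'' phi8 zt = q8 (rho8 γ'' zt.1) := by
    intro zt
    show q8 (zt.2 + rho8 γ'' zt.1) - q8 zt.2 = _
    rw [q8_sub, add_sub_cancel_left]
  have e1' : dGamma γ'' phi8 = fun zt => q8 (rho8 γ'' zt.1) := funext e1
  have e2 : dGamma γ' (dGamma γ'' phi8)
      = fun zt => q8 (rho8 γ'' (fun i => zt.1 i + γ' i) - rho8 γ'' zt.1) := by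
    rw [e1']
    funext zt
    show q8 (rho8 γ'' (fun i => zt.1 i + γ' i)) - q8 (rho8 γ'' zt.1) = _
    rw [q8_sub]
  have e3 : dGamma γ (dGamma γ' (dGamma γ'' phi8)) zt
      = q8 ((rho8 γ'' (fun i => (zt.1 i + γ i) + γ' i) - rho8 γ'' (fun i => zt.1 i + γ i))
          - (rho8 γ'' (fun i => zt.1 i + γ' i) - rho8 γ'' zt.1)) := by
    show dGamma γ' (dGamma γ'' phi8) (Tshift γ zt) - dGamma γ' (dGamma γ'' phi8) zt = _
    rw [e2]
    show q8 _ - q8 _ = _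
    rw [q8_sub]
    simp only [Tshift]
  rw [e3]
  set s : Finset ℕ := γ.support ∪ γ'.support ∪ γ''.support with hs
  have hγ : γ.support ⊆ s := by intro i hi; simp [hs, hi]
  have hγ' : γ'.support ⊆ s := by intro i hi; simp [hs, hi]
  have hγ'' : γ''.support ⊆ s := by intro i hi; simp [hs, hi]
  set N : ℕ := ∑ i ∈ s, (γ i).val * (γ' i).val * (γ'' i).val with hN
  have key : (rho8 γ'' (fun i => (zt.1 i + γ i) + γ' i) - rho8 γ'' (fun i => zt.1 i + γ i))
          - (rho8 γ'' (fun i => zt.1 i + γ' i) - rho8 γ'' zt.1) = ((4 * N : ℕ) : ZMod 8) := by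
    rw [rho8_eq_sum γ'' _ s hγ'', rho8_eq_sum γ'' _ s hγ'', rho8_eq_sum γ'' _ s hγ'',
      rho8_eq_sum γ'' _ s hγ'']
    rw [← Finset.sum_sub_distrib, ← Finset.sum_sub_distrib, ← Finset.sum_sub_distrib]
    rw [hN]
    push_cast
    rw [Finset.mul_sum]
    apply Finset.sum_congr rfl
    intro i _
    have h := coord_triple (zt.1 i) (γ' i) (γ i) (γ'' i)
    push_cast at h ⊢
    ring_nf at h ⊢
    rw [h]
  rw [key, q8_four_mul]
  congr 1
  rw [Finset.sum_subset hγ (fun i _ hi => by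
    simp only [Finsupp.notMem_support_iff] at hi
    simp [hi])]
  rw [hN]
  push_cast
  rw [Finset.sum_div]
end
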